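/- Let G be a finite abelian p-group and let X, Y be subgroups of G containing pG with |G : X| = |G : Y| ≤ p^2. Then X and Y are isomorphic as abstract groups if and only if (ℓ(X), L(X)) = (ℓ(Y), L(Y)). -/

import Mathlib

/-!
A finite abelian `p`-group is determined up to isomorphism by the orders of its torsion subgroups
`A[p^k]`, since `|A[p^k]| = p ^ ∑ᵢ min eᵢ k` for `A ≅ ∏ᵢ ℤ/p^eᵢ` and these sums recover the
multiset of the `eᵢ`. For a subgroup `M` of `G` we have
`|M[p^k]| = |G[p^k]| / |G[p^k] : M ∩ G[p^k]|`, so `X ≅ Y` iff `X` and `Y` cut every `G[p^k]`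
with the same relative index. That relative index divides `|G : M| = p^d` with `d ≤ 2`; it is `1`
iff `G[p^k] ≤ M` and `p^d` iff `G[p^k] + M = G`, so it is pinned down by these two conditions,
which in turn are encoded by `ℓ(M)` and `L(M)`.
-/

/-- The `p^i`-torsion subgroup `G[p^i] = {x ∈ G : p^i • x = 0}`. -/
def pTors (p i : ℕ) (G : Type*) [AddCommGroup G] : AddSubgroup G where
  carrier := {x | (p ^ i) • x = 0}
  zero_mem' := by simp
  add_mem' := by
    intro a b ha hb
    simp only [Set.mem_setOf_eq, smul_add] at *
    rw [ha, hb, add_zero]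
  neg_mem' := by
    intro a ha
    simp only [Set.mem_setOf_eq, smul_neg] at *
    rw [ha, neg_zero]

/-- The lower `T`-level `ℓ_T(M) = 1 + max{ i : T[p^i] ⊆ M ∩ T }` of a subgroup `M`.
For `T = ⊤` this is the `G`-level `ℓ(M)`. -/
noncomputable def levelL (p : ℕ) {G : Type*} [AddCommGroup G] (T M : AddSubgroup G) : ℕ :=
  1 + sSup {i : ℕ | pTors p i G ⊓ T ≤ M ⊓ T}

/-- The upper `T`-level `L_T(M) = min{ j : T[p^j] + (M ∩ T) = T }` of a subgroup `M`.
For `T = ⊤` this is the `G`-level `L(M)`. -/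
noncomputable def levelU (p : ℕ) {G : Type*} [AddCommGroup G] (T M : AddSubgroup G) : ℕ :=
  sInf {j : ℕ | (pTors p j G ⊓ T) ⊔ (M ⊓ T) = T}

/-- The subgroup `pG` of `G`. -/
def pMul (p : ℕ) (G : Type*) [AddCommGroup G] : AddSubgroup G :=
  (AddMonoidHom.mk' (fun x : G => p • x) (fun a b => smul_add p a b)).range

open Finset

section Torsion

variable {p : ℕ} {A B : Type*} [AddCommGroup A] [AddCommGroup B]

lemma mem_pTors {k : ℕ} {a : A} : a ∈ pTors p k A ↔ p ^ k • a = 0 := Iff.rfl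

lemma pTors_eq_ker (k : ℕ) : pTors p k A = (nsmulAddMonoidHom (p ^ k) : A →+ A).ker := rfl

lemma pTors_zero : pTors p 0 A = ⊥ := by
  ext a
  simp [mem_pTors]

lemma pTors_mono {i j : ℕ} (h : i ≤ j) : pTors p i A ≤ pTors p j A := by
  intro a ha
  obtain ⟨c, rfl⟩ := Nat.exists_eq_add_of_le h
  rw [mem_pTors, pow_add, mul_nsmul, mem_pTors.mp ha, smul_zero]

lemma exists_pTors_eq_top [Finite A] (hA : ∀ a : A, ∃ k : ℕ, p ^ k • a = 0) :
    ∃ e : ℕ, pTors p e A = ⊤ := by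
  have := Fintype.ofFinite A
  choose k hk using hA
  exact ⟨univ.sup k, eq_top_iff.mpr fun a _ => pTors_mono (le_sup (mem_univ a)) (hk a)⟩

lemma AddEquiv.card_pTors (E : A ≃+ B) (k : ℕ) :
    Nat.card (pTors p k A) = Nat.card (pTors p k B) :=
  Nat.card_congr <| E.toEquiv.subtypeEquiv fun a => by
    simp only [mem_pTors, AddEquiv.toEquiv_eq_coe, EquivLike.coe_coe,
      ← map_nsmul, AddEquivClass.map_eq_zero_iff]

lemma card_pTors_addSubgroup (M : AddSubgroup A) (k : ℕ) :
    Nat.card (pTors p k M) = Nat.card (M ⊓ pTors p k A : AddSubgroup A) := by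
  have : pTors p k M = (M ⊓ pTors p k A).addSubgroupOf M := by
    rw [AddSubgroup.inf_addSubgroupOf_left]
    ext x
    rw [AddSubgroup.mem_addSubgroupOf, mem_pTors, mem_pTors, ← ZeroMemClass.coe_eq_zero,
      AddSubgroup.coe_nsmul]
  rw [this]
  exact Nat.card_congr (AddSubgroup.addSubgroupOfEquivOfLe inf_le_left).toEquiv

lemma card_pTors_pi {ι : Type*} [Fintype ι] (A : ι → Type*) [∀ i, AddCommGroup (A i)] (k : ℕ) :
    Nat.card (pTors p k (∀ i, A i)) = ∏ i, Nat.card (pTors p k (A i)) := by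
  rw [← Nat.card_pi]
  refine Nat.card_congr ((Equiv.subtypeEquivRight fun x => ?_).trans Equiv.subtypePiEquivPi)
  exact funext_iff

end Torsion

section CyclicProducts

variable {p : ℕ}

lemma Nat.gcd_pow_pow (p e k : ℕ) : Nat.gcd (p ^ e) (p ^ k) = p ^ min e k := by
  rcases le_total e k with h | h
  · rw [min_eq_left h, Nat.gcd_eq_left (pow_dvd_pow p h)]
  · rw [min_eq_right h, Nat.gcd_eq_right (pow_dvd_pow p h)]

lemma card_pTors_zmod [NeZero p] (e k : ℕ) :
    Nat.card (pTors p k (ZMod (p ^ e))) = p ^ min e k := by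
  rw [pTors_eq_ker, IsAddCyclic.card_nsmulAddMonoidHom_ker, Nat.card_zmod, Nat.gcd_pow_pow]

lemma card_pTors_pi_zmod [NeZero p] {ι : Type*} [Fintype ι] (e : ι → ℕ) (k : ℕ) :
    Nat.card (pTors p k (∀ i, ZMod (p ^ e i))) = p ^ ∑ i, min (e i) k := by
  simp only [card_pTors_pi, card_pTors_zmod, prod_pow_eq_pow_sum]

lemma exists_addEquiv_pi_zmod_pow [Fact p.Prime] {A : Type*} [AddCommGroup A] [Finite A]
    (hA : ∀ a : A, ∃ k : ℕ, p ^ k • a = 0) :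
    ∃ (ι : Type) (_ : Fintype ι) (e : ι → ℕ), (∀ i, e i ≠ 0) ∧
      Nonempty (A ≃+ ∀ i, ZMod (p ^ e i)) := by
  classical
  obtain ⟨ι, _, n, hn, ⟨E⟩⟩ := AddCommGroup.equiv_directSum_zmod_of_finite' A
  let E' : A ≃+ ∀ i, ZMod (n i) := E.trans (DirectSum.addEquivProd _)
  have hpow : ∀ i, ∃ c, n i = p ^ c := by
    intro i
    obtain ⟨k, hk⟩ := hA (E'.symm (Pi.single i 1))
    have : ((p ^ k : ℕ) : ZMod (n i)) = 0 := by
      simpa [map_nsmul] using congrFun (congrArg E' hk) i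
    obtain ⟨c, -, hc⟩ := (Nat.dvd_prime_pow Fact.out).mp ((ZMod.natCast_eq_zero_iff _ _).mp this)
    exact ⟨c, hc⟩
  choose e he using hpow
  refine ⟨ι, inferInstance, e, fun i he0 => ?_,
    ⟨E'.trans (AddEquiv.piCongrRight fun i => (ZMod.ringEquivCongr (he i)).toAddEquiv)⟩⟩
  have := hn i
  rw [he i, he0, pow_zero] at this
  exact lt_irrefl 1 this

end CyclicProducts

section Partitions

variable {ι κ : Type*} [Fintype ι] [Fintype κ] {e : ι → ℕ} {f : κ → ℕ}

lemma sum_min_succ (e : ι → ℕ) (k : ℕ) :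
    ∑ i, min (e i) (k + 1) = ∑ i, min (e i) k + #{i | k < e i} := by
  rw [card_filter, ← sum_add_distrib]
  refine sum_congr rfl fun i _ => ?_
  split_ifs <;> omega

lemma card_filter_lt_eq_of_sum_min_eq (h : ∀ k, ∑ i, min (e i) k = ∑ j, min (f j) k) (k : ℕ) :
    #{i | k < e i} = #{j | k < f j} := by
  have := h (k + 1)
  rw [sum_min_succ, sum_min_succ, h k] at this
  omega

lemma card_filter_lt_eq_add (g : ι → ℕ) (m : ℕ) :
    #{i | m < g i} = #{i | m + 1 < g i} + #{i | g i = m + 1} := by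
  classical
  rw [← card_union_of_disjoint (disjoint_filter.mpr fun i _ h₁ h₂ => by omega), ← filter_or]
  congr 1
  exact filter_congr fun i _ => by omega

lemma exists_equiv_comp_eq_of_sum_min_eq (he : ∀ i, e i ≠ 0) (hf : ∀ j, f j ≠ 0)
    (h : ∀ k, ∑ i, min (e i) k = ∑ j, min (f j) k) : ∃ σ : ι ≃ κ, ∀ i, f (σ i) = e i := by
  classical
  have hfiber : ∀ m, Fintype.card {i // e i = m} = Fintype.card {j // f j = m} := by
    rintro (_ | m)
    · simp [he, hf]
    · have := card_filter_lt_eq_of_sum_min_eq h m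
      have := card_filter_lt_eq_of_sum_min_eq h (m + 1)
      have := card_filter_lt_eq_add e m
      have := card_filter_lt_eq_add f m
      rw [Fintype.card_subtype, Fintype.card_subtype]
      omega
  let τ m : {i // e i = m} ≃ {j // f j = m} := Fintype.equivOfCardEq (hfiber m)
  exact ⟨(Equiv.sigmaFiberEquiv e).symm.trans
    ((Equiv.sigmaCongrRight τ).trans (Equiv.sigmaFiberEquiv f)), fun i => (τ (e i) ⟨i, rfl⟩).2⟩

end Partitions

theorem nonempty_addEquiv_of_card_pTors_eq {p : ℕ} [Fact p.Prime] {A B : Type*}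
    [AddCommGroup A] [AddCommGroup B] [Finite A] [Finite B]
    (hA : ∀ a : A, ∃ k : ℕ, p ^ k • a = 0) (hB : ∀ b : B, ∃ k : ℕ, p ^ k • b = 0)
    (h : ∀ k, Nat.card (pTors p k A) = Nat.card (pTors p k B)) : Nonempty (A ≃+ B) := by
  classical
  obtain ⟨ι, _, e, he, ⟨EA⟩⟩ := exists_addEquiv_pi_zmod_pow hA
  obtain ⟨κ, _, f, hf, ⟨EB⟩⟩ := exists_addEquiv_pi_zmod_pow hB
  have hsum : ∀ k, ∑ i, min (e i) k = ∑ j, min (f j) k := fun k =>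
    Nat.pow_right_injective (Fact.out : p.Prime).two_le <| by
      simp only [← card_pTors_pi_zmod, ← EA.card_pTors, ← EB.card_pTors, h]
  obtain ⟨σ, hσ⟩ := exists_equiv_comp_eq_of_sum_min_eq he hf hsum
  obtain rfl : e = f ∘ σ := funext fun i => (hσ i).symm
  exact ⟨EA.trans ((RingEquiv.piCongrLeft (fun j => ZMod (p ^ f j)) σ).toAddEquiv.trans EB.symm)⟩

namespace AddSubgroup

variable {G : Type*} [AddCommGroup G]

lemma relIndex_mul_card_inf (M T : AddSubgroup G) :
    M.relIndex T * Nat.card (M ⊓ T : AddSubgroup G) = Nat.card T := by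
  rw [mul_comm, ← relIndex_bot_left, ← relIndex_bot_left,
    relIndex_inf_mul_relIndex, bot_inf_eq]

lemma relIndex_eq_iff_card_inf_eq [Finite G] {M N : AddSubgroup G} (T : AddSubgroup G) :
    M.relIndex T = N.relIndex T ↔
      Nat.card (M ⊓ T : AddSubgroup G) = Nat.card (N ⊓ T : AddSubgroup G) := by
  have hM := M.relIndex_mul_card_inf T
  have hN := N.relIndex_mul_card_inf T
  constructor <;> intro h <;> rw [h] at hM
  · have hN0 : N.relIndex T ≠ 0 := left_ne_zero_of_mul (hN.trans_ne Nat.card_pos.ne')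
    exact Nat.eq_of_mul_eq_mul_left (Nat.pos_of_ne_zero hN0) (hM.trans hN.symm)
  · exact Nat.eq_of_mul_eq_mul_right Nat.card_pos (hM.trans hN.symm)

lemma sup_eq_top_iff_relIndex_eq_index [Finite G] (M T : AddSubgroup G) :
    T ⊔ M = ⊤ ↔ M.relIndex T = M.index := by
  have key : M.relIndex T * (T ⊔ M).index = M.index := by
    rw [← relIndex_sup_right T M]
    exact relIndex_mul_index le_sup_right
  rw [← index_eq_one]
  constructor <;> intro h
  · rwa [h, mul_one] at key
  · rw [h] at key
    exact (Nat.mul_eq_left M.index_ne_zero_of_finite).mp key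

lemma exists_relIndex_eq_pow {p : ℕ} (hp : p.Prime) {M : AddSubgroup G} {d : ℕ}
    (hM : M.index = p ^ d) (T : AddSubgroup G) : ∃ c ≤ d, M.relIndex T = p ^ c :=
  (Nat.dvd_prime_pow hp).mp (hM ▸ M.relIndex_dvd_index_of_normal T)

lemma relIndex_eq_iff_of_index_eq_pow [Finite G] {p : ℕ} (hp : p.Prime)
    {M N : AddSubgroup G} {d : ℕ} (hM : M.index = p ^ d) (hN : N.index = p ^ d) (hd : d ≤ 2)
    (T : AddSubgroup G) :
    M.relIndex T = N.relIndex T ↔ ((T ≤ M ↔ T ≤ N) ∧ (T ⊔ M = ⊤ ↔ T ⊔ N = ⊤)) := by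
  obtain ⟨a, ha, hMa⟩ := M.exists_relIndex_eq_pow hp hM T
  obtain ⟨b, hb, hNb⟩ := N.exists_relIndex_eq_pow hp hN T
  have hinj (x y : ℕ) : p ^ x = p ^ y ↔ x = y := (Nat.pow_right_injective hp.two_le).eq_iff
  rw [← relIndex_eq_one, ← relIndex_eq_one,
    sup_eq_top_iff_relIndex_eq_index, sup_eq_top_iff_relIndex_eq_index,
    hMa, hNb, hM, hN, ← pow_zero p]
  simp only [hinj]
  omega

lemma exists_index_eq_pow [Finite G] {p : ℕ} [Fact p.Prime]
    (hG : ∀ g : G, ∃ k : ℕ, p ^ k • g = 0) (M : AddSubgroup G) : ∃ d, M.index = p ^ d := by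
  obtain ⟨n, hn⟩ := IsPGroup.iff_card.mp (fun g : Multiplicative G => hG g.toAdd)
  obtain ⟨d, -, hd⟩ := (Nat.dvd_prime_pow Fact.out).mp (hn ▸ M.index_dvd_card)
  exact ⟨d, hd⟩

end AddSubgroup

theorem nonempty_addEquiv_iff_relIndex_pTors_eq {p : ℕ} [Fact p.Prime] {G : Type*}
    [AddCommGroup G] [Finite G] (hG : ∀ g : G, ∃ k : ℕ, p ^ k • g = 0) (M N : AddSubgroup G) :
    Nonempty (M ≃+ N) ↔ ∀ k, M.relIndex (pTors p k G) = N.relIndex (pTors p k G) := by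
  simp only [AddSubgroup.relIndex_eq_iff_card_inf_eq, ← card_pTors_addSubgroup]
  refine ⟨fun ⟨E⟩ k => E.card_pTors k, nonempty_addEquiv_of_card_pTors_eq ?_ ?_⟩ <;>
    exact fun x => (hG x).imp fun k hk => Subtype.ext hk

section Levels

lemma Nat.eq_Iic_sSup_of_isLowerSet {S : Set ℕ} (hS : IsLowerSet S) (hne : S.Nonempty)
    (hbdd : BddAbove S) : S = Set.Iic (sSup S) :=
  Set.ext fun _ => ⟨fun h => le_csSup hbdd h, fun h => hS h (Nat.sSup_mem hne hbdd)⟩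

lemma Nat.eq_Ici_sInf_of_isUpperSet {S : Set ℕ} (hS : IsUpperSet S) (hne : S.Nonempty) :
    S = Set.Ici (sInf S) :=
  Set.ext fun _ => ⟨fun h => Nat.sInf_le h, fun h => hS h (Nat.sInf_mem hne)⟩

variable {p : ℕ} {G : Type*} [AddCommGroup G] [Finite G]

lemma levelL_top_eq_iff (hG : ∀ g : G, ∃ k : ℕ, p ^ k • g = 0) {M N : AddSubgroup G}
    (hM : M ≠ ⊤) (hN : N ≠ ⊤) :
    levelL p ⊤ M = levelL p ⊤ N ↔ ∀ k, (pTors p k G ≤ M ↔ pTors p k G ≤ N) := by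
  obtain ⟨e, he⟩ := exists_pTors_eq_top hG
  have hIic {K : AddSubgroup G} (hK : K ≠ ⊤) :
      {i | pTors p i G ≤ K} = Set.Iic (sSup {i | pTors p i G ≤ K}) := by
    refine Nat.eq_Iic_sSup_of_isLowerSet (fun i j hij hj => (pTors_mono hij).trans hj)
      ⟨0, by simp [pTors_zero]⟩ ⟨e, fun i hi => ?_⟩
    by_contra! hei
    exact hK (top_unique (he ▸ (pTors_mono hei.le).trans hi))
  simp only [levelL, inf_top_eq, add_right_inj]
  refine ⟨fun h k => Set.ext_iff.mp (?_ : {i | pTors p i G ≤ M} = {i | pTors p i G ≤ N}) k,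
    fun h => by simp only [h]⟩
  rw [hIic hM, hIic hN, h]

lemma levelU_top_eq_iff (hG : ∀ g : G, ∃ k : ℕ, p ^ k • g = 0) {M N : AddSubgroup G} :
    levelU p ⊤ M = levelU p ⊤ N ↔ ∀ k, (pTors p k G ⊔ M = ⊤ ↔ pTors p k G ⊔ N = ⊤) := by
  obtain ⟨e, he⟩ := exists_pTors_eq_top hG
  have hIci (K : AddSubgroup G) :
      {j | pTors p j G ⊔ K = ⊤} = Set.Ici (sInf {j | pTors p j G ⊔ K = ⊤}) :=
    Nat.eq_Ici_sInf_of_isUpperSet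
      (fun i j hij hi => top_unique (hi ▸ sup_le_sup_right (pTors_mono hij) K))
      ⟨e, by simp [he]⟩
  simp only [levelU, inf_top_eq]
  refine ⟨fun h k => Set.ext_iff.mp
    (?_ : {j | pTors p j G ⊔ M = ⊤} = {j | pTors p j G ⊔ N = ⊤}) k, fun h => by simp only [h]⟩
  rw [hIci M, hIci N, h]

end Levels

theorem stmt9_general (p : ℕ) [Fact p.Prime] (G : Type*) [AddCommGroup G] [Finite G]
    (hpG : ∀ g : G, ∃ k : ℕ, p ^ k • g = 0)
    (X Y : AddSubgroup G)
    (hXY : X.index = Y.index) (hle : Y.index ≤ p ^ 2) :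
    Nonempty (X ≃+ Y) ↔
      (levelL p ⊤ X = levelL p ⊤ Y ∧ levelU p ⊤ X = levelU p ⊤ Y) := by
  obtain ⟨d, hYd⟩ := Y.exists_index_eq_pow hpG
  have hd : d ≤ 2 := (Nat.pow_le_pow_iff_right (Fact.out : p.Prime).one_lt).mp (hYd ▸ hle)
  rcases eq_or_ne Y ⊤ with rfl | hYtop
  · obtain rfl : X = ⊤ := AddSubgroup.index_eq_one.mp (hXY.trans AddSubgroup.index_top)
    exact iff_of_true ⟨AddEquiv.refl _⟩ ⟨rfl, rfl⟩
  have hXtop : X ≠ ⊤ := fun hX => hYtop (AddSubgroup.index_eq_one.mp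
    (hXY.symm.trans (hX ▸ AddSubgroup.index_top)))
  rw [levelL_top_eq_iff hpG hXtop hYtop, levelU_top_eq_iff hpG, ← forall_and,
    nonempty_addEquiv_iff_relIndex_pTors_eq hpG]
  exact forall_congr' fun k =>
    AddSubgroup.relIndex_eq_iff_of_index_eq_pow Fact.out (hXY.trans hYd) hYd hd _

/-- Subgroups `X, Y ⊇ pG` of equal index at most `p²` are isomorphic as abstract
groups iff they have the same `G`-levels. -/
theorem stmt9 (p : ℕ) [Fact p.Prime] (G : Type*) [AddCommGroup G] [Finite G]
    (hpG : ∀ g : G, ∃ k : ℕ, p ^ k • g = 0)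
    (X Y : AddSubgroup G) (hX : pMul p G ≤ X) (hY : pMul p G ≤ Y)
    (hXY : X.index = Y.index) (hle : Y.index ≤ p ^ 2) :
    Nonempty (X ≃+ Y) ↔
      (levelL p ⊤ X = levelL p ⊤ Y ∧ levelU p ⊤ X = levelU p ⊤ Y) :=
  stmt9_general p G hpG X Y hXY hle
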